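/- Let α > 0, β > 0, and let s > 0 be a real number. Then ∫₀^∞ e^{−st} · (∑_{k=0}^∞ (− k · ψ(αk+β) / (k! · Γ(αk+β))) · t^k) dt = − (1/s) · ∑_{k=0}^∞ s^{−k} · k · ψ(αk+β) / Γ(αk+β). (The integrand series is the term-by-term derivative with respect to α of the Wright function W_{α,β}(t).) -/

import Mathlib

/-!
The `k`-th term of the series is a multiple of `t ^ k`, whose Laplace transform is
`k! / s ^ (k + 1)`, so the identity is term-by-term integration, justified by dominated convergence
as soon as `∑ k |ψ(αk + β)| / (s ^ (k + 1) Γ(αk + β))` converges. Log-convexity of `Γ` squeezes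
`ψ(x)` between `log (x - 1)` and `log x`, so `|ψ(x)| ≤ x` for `x ≥ 2`; and `R ^ (x - 2) ≤ e ^ R Γ(x)`
for every `R ≥ 1` (compare `Γ(x)` with `(⌊x⌋ - 1)!` and use `R ^ n / n! ≤ e ^ R`), so `Γ(αk + β)`
beats every geometric sequence.
-/

open Real MeasureTheory

/-- The digamma function `ψ(x) = the logarithmic derivative of Γ`, i.e. the derivative of `log ∘ Γ`. -/
noncomputable def digamma (x : ℝ) : ℝ := deriv (fun y : ℝ => Real.log (Real.Gamma y)) x

open Set Filter
open scoped Nat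

theorem differentiableAt_log_Gamma {x : ℝ} (hx : 0 < x) :
    DifferentiableAt ℝ (log ∘ Gamma) x :=
  (differentiableAt_Gamma fun m ↦ by linarith [(m.cast_nonneg : (0 : ℝ) ≤ m)]).log
    (Gamma_pos_of_pos hx).ne'

theorem log_Gamma_add_one_sub_log_Gamma {x : ℝ} (hx : 0 < x) :
    log (Gamma (x + 1)) - log (Gamma x) = log x := by
  rw [Gamma_add_one hx.ne', log_mul hx.ne' (Gamma_pos_of_pos hx).ne', add_sub_cancel_right]

theorem log_sub_one_le_digamma {x : ℝ} (hx : 1 < x) : log (x - 1) ≤ digamma x := by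
  have h := convexOn_log_Gamma.slope_le_deriv (x := x - 1) (by simpa using hx)
    (show x ∈ Ioi 0 by simp; linarith) (by linarith) (differentiableAt_log_Gamma (by linarith))
  have h1 := log_Gamma_add_one_sub_log_Gamma (x := x - 1) (by linarith)
  rw [sub_add_cancel] at h1
  show _ ≤ deriv (log ∘ Gamma) x
  simpa [slope_def_field, h1] using h

theorem digamma_le_log {x : ℝ} (hx : 0 < x) : digamma x ≤ log x := by
  have h := convexOn_log_Gamma.deriv_le_slope (y := x + 1) hx
    (show x + 1 ∈ Ioi 0 by simp; linarith) (by linarith) (differentiableAt_log_Gamma hx)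
  show deriv (log ∘ Gamma) x ≤ _
  simpa [slope_def_field, log_Gamma_add_one_sub_log_Gamma hx] using h

theorem abs_digamma_le_self {x : ℝ} (hx : 2 ≤ x) : |digamma x| ≤ x := by
  have hψ : 0 ≤ digamma x :=
    (log_nonneg (by linarith)).trans (log_sub_one_le_digamma (by linarith))
  rw [abs_of_nonneg hψ]
  calc digamma x ≤ log x := digamma_le_log (by linarith)
    _ ≤ x - 1 := log_le_sub_one_of_pos (by linarith)
    _ ≤ x := by linarith

theorem rpow_sub_two_le_exp_mul_Gamma {R x : ℝ} (hR : 1 ≤ R) (hx : 2 ≤ x) :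
    R ^ (x - 2) ≤ exp R * Gamma x := by
  set N := ⌊x⌋₊ - 1
  have hN : (N : ℝ) + 1 = ⌊x⌋₊ := by
    have : 1 ≤ ⌊x⌋₊ := Nat.le_floor (by norm_num; linarith)
    simp [N, Nat.cast_sub this]
  have hNx : x - 2 ≤ N := by linarith [Nat.lt_floor_add_one x]
  have hN2 : (2 : ℝ) ≤ N + 1 := by
    rw [hN]; exact_mod_cast Nat.le_floor (by exact_mod_cast hx)
  calc R ^ (x - 2) ≤ R ^ (N : ℝ) := rpow_le_rpow_of_exponent_le hR hNx
    _ ≤ exp R * N ! := by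
      rw [rpow_natCast]
      exact (div_le_iff₀ (by positivity)).1 (pow_div_factorial_le_exp R (by linarith) N)
    _ = exp R * Gamma (N + 1) := by rw [Gamma_nat_eq_factorial]
    _ ≤ exp R * Gamma x := by
      gcongr
      exact Gamma_strictMonoOn_Ici.monotoneOn hN2 hx (hN ▸ Nat.floor_le (by linarith))

theorem eventually_le_mul_natCast_add {α : ℝ} (hα : 0 < α) (β c : ℝ) :
    ∀ᶠ k : ℕ in atTop, c ≤ α * k + β :=
  (tendsto_atTop_add_const_right _ β
    (tendsto_natCast_atTop_atTop.const_mul_atTop hα)).eventually_ge_atTop c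

theorem summable_pow_div_Gamma {α : ℝ} (hα : 0 < α) (β z : ℝ) :
    Summable fun k : ℕ ↦ z ^ k / Gamma (α * k + β) := by
  -- chosen so that `R ^ (α * k) = (2 * |z| + 1) ^ k ≥ 2 ^ k * |z| ^ k`
  set R := (2 * |z| + 1) ^ α⁻¹
  have hR : 1 ≤ R := one_le_rpow (by linarith [abs_nonneg z]) (by positivity)
  refine .of_norm_bounded_eventually_nat
    ((summable_geometric_two).mul_left (exp R * R ^ (2 - β))) ?_
  filter_upwards [eventually_le_mul_natCast_add hα β 2] with k hk
  have hΓ : 0 < Gamma (α * k + β) := Gamma_pos_of_pos (by linarith)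
  have hRk : R ^ (α * k : ℝ) = (2 * |z| + 1) ^ k := by
    rw [← rpow_mul (by positivity), inv_mul_cancel_left₀ hα.ne', rpow_natCast]
  have hzk : 2 ^ k * |z| ^ k ≤ (2 * |z| + 1) ^ k := by
    rw [← mul_pow]; gcongr; linarith
  rw [norm_div, norm_pow, Real.norm_eq_abs, Real.norm_eq_abs, abs_of_pos hΓ,
    div_le_iff₀ hΓ]
  calc |z| ^ k = (1 / 2) ^ k * (2 ^ k * |z| ^ k) := by
        rw [← mul_assoc, ← mul_pow]; norm_num
    _ ≤ (1 / 2) ^ k * (R ^ (α * k + β - 2) * R ^ (2 - β)) := by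
        rw [← rpow_add (by positivity), sub_add_sub_cancel, add_sub_cancel_right, hRk]
        exact mul_le_mul_of_nonneg_left hzk (by positivity)
    _ ≤ (1 / 2) ^ k * (exp R * Gamma (α * k + β) * R ^ (2 - β)) := by
        gcongr; exact rpow_sub_two_le_exp_mul_Gamma hR hk
    _ = _ := by ring

theorem summable_natCast_mul_digamma_mul_pow_div_Gamma {α : ℝ} (hα : 0 < α) (β z : ℝ) :
    Summable fun k : ℕ ↦ k * digamma (α * k + β) * z ^ k / Gamma (α * k + β) := by
  refine .of_norm_bounded_eventually_nat
    ((summable_pow_div_Gamma hα β (4 * |z|)).mul_left (α + |β|)) ?_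
  filter_upwards [eventually_le_mul_natCast_add hα β 2] with k hk
  have hΓ : 0 < Gamma (α * k + β) := Gamma_pos_of_pos (by linarith)
  have hk4 : ((k : ℝ) + 1) ^ 2 ≤ 4 ^ k := by
    have : (k : ℝ) + 1 ≤ 2 ^ k := by exact_mod_cast Nat.lt_two_pow_self
    calc ((k : ℝ) + 1) ^ 2 ≤ (2 ^ k) ^ 2 := by gcongr
      _ = 4 ^ k := by rw [← pow_mul, mul_comm, pow_mul]; norm_num
  have hkψ : k * |digamma (α * k + β)| ≤ (α + |β|) * 4 ^ k :=
    calc k * |digamma (α * k + β)| ≤ k * (α * k + β) := by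
          gcongr; exact abs_digamma_le_self hk
      _ ≤ (α + |β|) * ((k : ℝ) + 1) ^ 2 := by
          nlinarith [mul_nonneg hα.le (by positivity : (0 : ℝ) ≤ 2 * k + 1),
            mul_le_mul_of_nonneg_right (le_abs_self β) k.cast_nonneg,
            mul_nonneg (abs_nonneg β) (by positivity : (0 : ℝ) ≤ k ^ 2 + k + 1)]
      _ ≤ (α + |β|) * 4 ^ k := mul_le_mul_of_nonneg_left hk4 (by positivity)
  simp only [norm_div, norm_mul, norm_pow, Real.norm_eq_abs, Nat.abs_cast, abs_of_pos hΓ]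
  calc k * |digamma (α * k + β)| * |z| ^ k / Gamma (α * k + β)
      = k * |digamma (α * k + β)| * (|z| ^ k / Gamma (α * k + β)) := by ring
    _ ≤ (α + |β|) * 4 ^ k * (|z| ^ k / Gamma (α * k + β)) := by gcongr
    _ = (α + |β|) * ((4 * |z|) ^ k / Gamma (α * k + β)) := by ring

theorem integral_exp_neg_mul_mul_pow {s : ℝ} (hs : 0 < s) (k : ℕ) :
    ∫ t in Ioi 0, exp (-(s * t)) * t ^ k = k ! / s ^ (k + 1) := by
  have h := integral_rpow_mul_exp_neg_mul_Ioi (a := k + 1) (by positivity) hs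
  rw [add_sub_cancel_right, Gamma_nat_eq_factorial, ← Nat.cast_succ, one_div, inv_rpow hs.le,
    rpow_natCast] at h
  simp_rw [rpow_natCast] at h
  rw [← inv_mul_eq_div, ← h]
  simp_rw [mul_comm (exp _)]

theorem integrableOn_exp_neg_mul_mul_pow {s : ℝ} (hs : 0 < s) (k : ℕ) :
    IntegrableOn (fun t ↦ exp (-(s * t)) * t ^ k) (Ioi 0) :=
  .of_integral_ne_zero <| by rw [integral_exp_neg_mul_mul_pow hs]; positivity

theorem integral_exp_neg_mul_mul_tsum_pow {s : ℝ} (hs : 0 < s) {c : ℕ → ℝ}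
    (hc : Summable fun k ↦ |c k| * k ! / s ^ (k + 1)) :
    ∫ t in Ioi 0, exp (-(s * t)) * ∑' k, c k * t ^ k = ∑' k, c k * k ! / s ^ (k + 1) := by
  set F : ℕ → ℝ → ℝ := fun k t ↦ c k * (exp (-(s * t)) * t ^ k)
  have hF : ∀ k, ∫ t in Ioi 0, F k t = c k * k ! / s ^ (k + 1) := fun k ↦ by
    rw [integral_const_mul, integral_exp_neg_mul_mul_pow hs, mul_div_assoc]
  have hnorm : ∀ k, ∫ t in Ioi 0, ‖F k t‖ = |c k| * k ! / s ^ (k + 1) := fun k ↦ by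
    rw [setIntegral_congr_fun measurableSet_Ioi
      (g := fun t ↦ |c k| * (exp (-(s * t)) * t ^ k)) fun t ht ↦ ?_,
      integral_const_mul, integral_exp_neg_mul_mul_pow hs, mul_div_assoc]
    simp [F, abs_of_pos (mem_Ioi.1 ht)]
  calc ∫ t in Ioi 0, exp (-(s * t)) * ∑' k, c k * t ^ k
      = ∫ t in Ioi 0, ∑' k, F k t := by
        simp_rw [F, ← tsum_mul_left, mul_left_comm]
    _ = ∑' k, ∫ t in Ioi 0, F k t :=
        (integral_tsum_of_summable_integral_norm
          (fun k ↦ (integrableOn_exp_neg_mul_mul_pow hs k).const_mul (c k))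
          (hc.congr fun k ↦ (hnorm k).symm)).symm
    _ = ∑' k, c k * k ! / s ^ (k + 1) := tsum_congr hF

theorem laplace_deriv_alpha_Wright_general (α β s : ℝ) (hα : 0 < α) (hs : 0 < s) :
    (∫ t in Set.Ioi (0 : ℝ), Real.exp (-(s * t)) *
        ∑' k : ℕ, (-((k : ℝ) * digamma (α * k + β) /
          (k.factorial * Real.Gamma (α * k + β)))) * t ^ k)
      = -((1 / s) * ∑' k : ℕ, s ^ (-(k : ℝ)) * k * digamma (α * k + β) /
          Real.Gamma (α * k + β)) := by
  have hterm : ∀ k : ℕ, -((k : ℝ) * digamma (α * k + β) / (k ! * Gamma (α * k + β))) * k ! /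
      s ^ (k + 1) = -(1 / s * (s ^ (-(k : ℝ)) * k * digamma (α * k + β) / Gamma (α * k + β))) :=
    fun k ↦ by
      rw [rpow_neg hs.le, rpow_natCast]
      field_simp
      ring
  rw [integral_exp_neg_mul_mul_tsum_pow hs, tsum_congr hterm, tsum_neg, tsum_mul_left]
  refine ((summable_natCast_mul_digamma_mul_pow_div_Gamma hα β s⁻¹).abs.div_const s).congr
    fun k ↦ ?_
  simp only [abs_neg, abs_div, abs_mul, Nat.abs_cast, abs_pow, abs_inv, abs_of_pos hs, inv_pow]
  field_simp
  ring

theorem laplace_deriv_alpha_Wright (α β s : ℝ) (hα : 0 < α) (hβ : 0 < β) (hs : 0 < s) :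
    (∫ t in Set.Ioi (0 : ℝ), Real.exp (-(s * t)) *
        ∑' k : ℕ, (-((k : ℝ) * digamma (α * k + β) /
          (k.factorial * Real.Gamma (α * k + β)))) * t ^ k)
      = -((1 / s) * ∑' k : ℕ, s ^ (-(k : ℝ)) * k * digamma (α * k + β) /
          Real.Gamma (α * k + β)) :=
  laplace_deriv_alpha_Wright_general α β s hα hs
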